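/- Let K = L ∩ S₊ⁿ be a spectrahedral cone, let H₁, H₂ ⊆ ℝⁿ be linear subspaces, and set F_i = K ∩ L_n(H_i) for i = 1, 2. Suppose every X ∈ K can be written as X = X₁ + X₂ with X₁ ∈ F₁ and X₂ ∈ F₂. Then K is rank one generated if and only if both F₁ and F₂ are rank one generated. -/

import Mathlib

open Matrix

/-- A set of matrices is rank one generated (ROG) if every element is a finite
sum of rank-1 matrices belonging to the set. -/
def IsROG {n : ℕ} (K : Set (Matrix (Fin n) (Fin n) ℝ)) : Prop :=
  ∀ X ∈ K, ∃ (N : ℕ) (Y : Fin N → Matrix (Fin n) (Fin n) ℝ),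
    (∀ i, Y i ∈ K ∧ (Y i).rank = 1) ∧ X = ∑ i, Y i

/-- `L_n(H)`: the linear span of the rank-1 matrices `x xᵀ` with `x ∈ H`. -/
def LnSpan {n : ℕ} (H : Submodule ℝ (Fin n → ℝ)) :
    Submodule ℝ (Matrix (Fin n) (Fin n) ℝ) :=
  Submodule.span ℝ {M | ∃ x ∈ H, M = vecMulVec x x}

open Module in
lemma psd_rank_one_struct {n : ℕ} {Y : Matrix (Fin n) (Fin n) ℝ}
    (hY : Y.PosSemidef) (hr : Y.rank = 1) : ∃ y, Y = vecMulVec y y := by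
  have hfr : finrank ℝ (LinearMap.range Y.mulVecLin) = 1 := hr
  obtain ⟨v, hv0, hvspan⟩ := finrank_eq_one_iff'.mp hfr
  set y : Fin n → ℝ := (v : Fin n → ℝ) with hy
  have hy0 : y ≠ 0 := fun h => hv0 (Subtype.ext h)
  have hcol : ∀ j, ∃ c : ℝ, ∀ i, Y i j = c * y i := by
    intro j
    have hmem : (Y *ᵥ Pi.single j 1) ∈ LinearMap.range Y.mulVecLin :=
      ⟨Pi.single j 1, rfl⟩
    obtain ⟨c, hc⟩ := hvspan ⟨_, hmem⟩
    refine ⟨c, fun i => ?_⟩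
    have h1 := congrArg (fun w : LinearMap.range Y.mulVecLin => (w : Fin n → ℝ) i) hc
    simp only [Submodule.coe_smul, Pi.smul_apply, smul_eq_mul] at h1
    have h2 : (Y *ᵥ Pi.single j 1) i = Y i j := by simp [mulVec_single]
    rw [← h2, ← h1]
  choose c hc using hcol
  have hsym : ∀ i j, Y i j = Y j i := fun i j => by
    have := congrFun (congrFun hY.1 i) j
    simpa using this.symm
  obtain ⟨i0, hi0⟩ : ∃ i0, y i0 ≠ 0 := by
    by_contra h
    push_neg at h
    exact hy0 (funext h)
  obtain ⟨t, ht⟩ : ∃ t : ℝ, t = c i0 / y i0 := ⟨_, rfl⟩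
  have hcj : ∀ j, c j = t * y j := by
    intro j
    have e : c j * y i0 = c i0 * y j := by rw [← hc j i0, hsym i0 j, hc i0 j]
    rw [ht, div_mul_eq_mul_div, eq_div_iff hi0]
    linarith [e]
  have hYij : ∀ i j, Y i j = t * y i * y j := fun i j => by
    rw [hc j i, hcj j]; ring
  have ht0 : 0 ≤ t := by
    have hd : 0 ≤ Y i0 i0 := by
      have := hY.dotProduct_mulVec_nonneg (Pi.single i0 1)
      simpa [dotProduct, mulVec, Pi.single_apply] using this
    rw [hYij i0 i0] at hd
    nlinarith [mul_self_pos.mpr hi0]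
  have htne : t ≠ 0 := by
    intro h
    have hz : Y = 0 := by
      ext i j
      simp [hYij i j, h]
    rw [hz] at hr
    rw [Matrix.rank, Matrix.mulVecLin_zero, LinearMap.range_zero] at hr
    simp [finrank_bot] at hr
  refine ⟨Real.sqrt t • y, ?_⟩
  ext i j
  rw [hYij i j]
  simp only [vecMulVec_apply, Pi.smul_apply, smul_eq_mul]
  have hs : Real.sqrt t * Real.sqrt t = t := Real.mul_self_sqrt ht0
  linear_combination (-(y i * y j)) * hs

lemma vecMulVec_mulVec' {n : ℕ} (y z : Fin n → ℝ) :
    vecMulVec y y *ᵥ z = (y ⬝ᵥ z) • y := by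
  funext i
  simp only [mulVec, vecMulVec_apply, dotProduct, Pi.smul_apply, smul_eq_mul, Finset.sum_mul]
  exact Finset.sum_congr rfl fun j _ => by ring

lemma quad_vecMulVec {n : ℕ} (y z : Fin n → ℝ) :
    z ⬝ᵥ (vecMulVec y y *ᵥ z) = (y ⬝ᵥ z) * (y ⬝ᵥ z) := by
  rw [vecMulVec_mulVec', dotProduct_smul, smul_eq_mul, dotProduct_comm]

lemma quad_zero_of_mem_LnSpan {n : ℕ} (H : Submodule ℝ (Fin n → ℝ))
    {X : Matrix (Fin n) (Fin n) ℝ} (hX : X ∈ LnSpan H)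
    {z : Fin n → ℝ} (hz : ∀ x ∈ H, x ⬝ᵥ z = 0) :
    z ⬝ᵥ (X *ᵥ z) = 0 := by
  induction hX using Submodule.span_induction with
  | mem M hM => obtain ⟨x, hx, rfl⟩ := hM; rw [quad_vecMulVec, hz x hx, mul_zero]
  | zero => simp
  | add A B _ _ hA hB => simp [add_mulVec, dotProduct_add, hA, hB]
  | smul c A _ hA => simp [smul_mulVec, dotProduct_smul, hA]

lemma mem_of_dot_orth {n : ℕ} (H : Submodule ℝ (Fin n → ℝ)) (y : Fin n → ℝ)
    (h : ∀ z, (∀ x ∈ H, x ⬝ᵥ z = 0) → y ⬝ᵥ z = 0) : y ∈ H := by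
  let H' : Submodule ℝ (EuclideanSpace ℝ (Fin n)) :=
    H.map (WithLp.linearEquiv 2 ℝ (Fin n → ℝ)).symm.toLinearMap
  have key : ∀ a b : Fin n → ℝ,
      (inner ℝ (WithLp.toLp 2 a) (WithLp.toLp 2 b) : ℝ) = a ⬝ᵥ b := by
    intro a b
    rw [EuclideanSpace.inner_toLp_toLp, star_trivial, dotProduct_comm]
  have hmem : WithLp.toLp 2 y ∈ H'ᗮᗮ := by
    rw [Submodule.mem_orthogonal]
    intro z hz
    rw [Submodule.mem_orthogonal] at hz
    obtain ⟨z', rfl⟩ : ∃ z', z = WithLp.toLp 2 z' := ⟨z.ofLp, rfl⟩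
    rw [key, dotProduct_comm]
    exact h z' fun x hx => by rw [← key]; exact hz _ (Submodule.mem_map.mpr ⟨x, hx, rfl⟩)
  rw [Submodule.orthogonal_orthogonal] at hmem
  obtain ⟨x, hx, hxy⟩ := Submodule.mem_map.mp hmem
  have hxy' : x = y := congrArg WithLp.ofLp hxy
  exact hxy' ▸ hx

lemma rog_inter {n : ℕ} (K : Set (Matrix (Fin n) (Fin n) ℝ))
    (hpsd : ∀ X ∈ K, X.PosSemidef)
    (H : Submodule ℝ (Fin n → ℝ))
    (F : Set (Matrix (Fin n) (Fin n) ℝ))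
    (hF : F = {X ∈ K | X ∈ LnSpan H})
    (hROG : IsROG K) : IsROG F := by
  intro X hXF
  rw [hF] at hXF
  obtain ⟨hXK, hXL⟩ := hXF
  obtain ⟨N, Y, hY, hsum⟩ := hROG X hXK
  have hpsdY : ∀ i, (Y i).PosSemidef := fun i => hpsd _ (hY i).1
  have hstruct : ∀ i, ∃ y, Y i = vecMulVec y y := fun i =>
    psd_rank_one_struct (hpsdY i) (hY i).2
  choose y hyeq using hstruct
  have hyH : ∀ i, y i ∈ H := by
    intro i
    apply mem_of_dot_orth
    intro z hz
    have hq : z ⬝ᵥ (X *ᵥ z) = 0 := quad_zero_of_mem_LnSpan H hXL hz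
    have hsum' : ∑ k, (y k ⬝ᵥ z) * (y k ⬝ᵥ z) = 0 := by
      rw [← hq, hsum]
      have hmv : (∑ k, Y k) *ᵥ z = ∑ k, Y k *ᵥ z := by
        funext i0
        simp only [mulVec, dotProduct, Finset.sum_apply, Matrix.sum_apply, Finset.sum_mul]
        exact Finset.sum_comm
      rw [hmv]
      have hds : z ⬝ᵥ ∑ k, Y k *ᵥ z = ∑ k, z ⬝ᵥ (Y k *ᵥ z) := by
        simp only [dotProduct, Finset.sum_apply, Finset.mul_sum]
        exact Finset.sum_comm
      rw [hds]
      exact (Finset.sum_congr rfl fun k _ => by rw [hyeq k, quad_vecMulVec]).symm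
    have := (Finset.sum_eq_zero_iff_of_nonneg
      (fun k _ => mul_self_nonneg (y k ⬝ᵥ z))).mp hsum' i (Finset.mem_univ i)
    exact mul_self_eq_zero.mp this
  refine ⟨N, Y, fun i => ⟨?_, (hY i).2⟩, hsum⟩
  rw [hF]
  exact ⟨(hY i).1, hyeq i ▸ Submodule.subset_span ⟨y i, hyH i, rfl⟩⟩

theorem stmt_14 {n : ℕ} (L : Submodule ℝ (Matrix (Fin n) (Fin n) ℝ))
    (K : Set (Matrix (Fin n) (Fin n) ℝ))
    (hK : K = {X | X ∈ L ∧ X.PosSemidef})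
    (H₁ H₂ : Submodule ℝ (Fin n → ℝ))
    (F₁ F₂ : Set (Matrix (Fin n) (Fin n) ℝ))
    (hF₁ : F₁ = {X ∈ K | X ∈ LnSpan H₁})
    (hF₂ : F₂ = {X ∈ K | X ∈ LnSpan H₂})
    (hdec : ∀ X ∈ K, ∃ X₁ ∈ F₁, ∃ X₂ ∈ F₂, X = X₁ + X₂) :
    IsROG K ↔ (IsROG F₁ ∧ IsROG F₂) := by
  have hpsd : ∀ X ∈ K, X.PosSemidef := by
    intro X hX
    rw [hK] at hX
    exact hX.2
  constructor
  · intro hROG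
    exact ⟨rog_inter K hpsd H₁ F₁ hF₁ hROG, rog_inter K hpsd H₂ F₂ hF₂ hROG⟩
  · rintro ⟨h1, h2⟩
    intro X hX
    obtain ⟨X₁, hX₁, X₂, hX₂, hXeq⟩ := hdec X hX
    obtain ⟨N₁, Y₁, hY₁, hs₁⟩ := h1 X₁ hX₁
    obtain ⟨N₂, Y₂, hY₂, hs₂⟩ := h2 X₂ hX₂
    have hF₁K : F₁ ⊆ K := by rw [hF₁]; exact fun _ h => h.1
    have hF₂K : F₂ ⊆ K := by rw [hF₂]; exact fun _ h => h.1
    refine ⟨N₁ + N₂, Fin.addCases Y₁ Y₂, ?_, ?_⟩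
    · intro i
      refine Fin.addCases (fun j => ?_) (fun j => ?_) i
      · simp only [Fin.addCases_left]
        exact ⟨hF₁K (hY₁ j).1, (hY₁ j).2⟩
      · simp only [Fin.addCases_right]
        exact ⟨hF₂K (hY₂ j).1, (hY₂ j).2⟩
    · rw [Fin.sum_univ_add]
      simp only [Fin.addCases_left, Fin.addCases_right]
      rw [hXeq, hs₁, hs₂]
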